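/- Let A be a unital C*-algebra, X and Y compact Hausdorff spaces, and ι_C : C(X) → A, ι_D : C(Y) → A unital *-homomorphisms forming a relatively diffuse pair. Let K be a complex Hilbert space and let φ : A → B(K), φ_C : ℓ∞(X) → B(K), φ_D : ℓ∞(Y) → B(K) be unital *-homomorphisms into the bounded operators on K such that φ_C composed with the inclusion C(X) ⊆ ℓ∞(X) equals φ ∘ ι_C and φ_D composed with the inclusion C(Y) ⊆ ℓ∞(Y) equals φ ∘ ι_D. Suppose moreover that for every vector v ∈ K the family (φ_C(δ_x) v)_{x∈X} is summable in K with sum v, and the family (φ_D(δ_y) v)_{y∈Y} is summable in K with sum v. Then K = 0, i.e., every vector of K is zero. -/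

import Mathlib

/-!
If `K ≠ 0`, normality of `φ_D` gives a `y` with `φ_D(δ_y) ≠ 0`; take a unit vector `w` in its
range. Then `φ(ι_D g) w = g(y) w`, so the vector state of `w` is multiplicative on `C(Y)`, and
relative diffuseness represents it on `C(X)` by an atomless regular measure `μ`. For every `x`
and every continuous `0 ≤ f ≤ 1` with `f x = 1` we have `δ_x ≤ f` in `ℓ∞(X)`, hence
`‖φ_C(δ_x) w‖² ≤ ∫ f dμ`, and outer regularity at the null set `{x}` makes the right side
arbitrarily small. So `w` is killed by every `φ_C(δ_x)`, which contradicts the normality of `φ_C`.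
-/

open MeasureTheory
open scoped ENNReal ComplexOrder

/-- The canonical inclusion of `C(X)` into `ℓ∞(X)` for a compact Hausdorff space `X`,
sending a continuous function to the corresponding bounded function. -/
noncomputable def inclCLinf {X : Type*} [TopologicalSpace X] [CompactSpace X]
    (f : C(X, ℂ)) : lp (fun _ : X => ℂ) ∞ :=
  ⟨fun x => f x, memℓp_infty (isCompact_range ((map_continuous f).norm)).bddAbove⟩

open scoped Classical in
/-- The indicator function `δ_x ∈ ℓ∞(X)` of the singleton `{x}`. -/
noncomputable def linfDelta {X : Type*} (x : X) : lp (fun _ : X => ℂ) ∞ :=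
  ⟨fun z => if z = x then 1 else 0,
    memℓp_infty ⟨1, by rintro r ⟨z, rfl⟩; dsimp only; split <;> simp⟩⟩

/-- A pair of unital `*`-homomorphisms `ι_C : C(X) → A`, `ι_D : C(Y) → A` is *relatively
diffuse* if every state `ψ` of `A` whose composite with `ι_D` is multiplicative (i.e. a
character of `C(Y)`) is, on `C(X)`, given by integration against an atomless regular Borel
probability measure on `X`. -/
def RelativelyDiffuse {A : Type*} [CStarAlgebra A]
    {X Y : Type*} [TopologicalSpace X] [CompactSpace X] [T2Space X]
    [MeasurableSpace X] [BorelSpace X]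
    [TopologicalSpace Y] [CompactSpace Y] [T2Space Y]
    (ιC : C(X, ℂ) →⋆ₐ[ℂ] A) (ιD : C(Y, ℂ) →⋆ₐ[ℂ] A) : Prop :=
  ∀ ψ : A →ₗ[ℂ] ℂ, ψ 1 = 1 → (∀ a : A, 0 ≤ ψ (star a * a)) →
    (∀ g h : C(Y, ℂ), ψ (ιD (g * h)) = ψ (ιD g) * ψ (ιD h)) →
    ∃ μ : Measure X, μ.Regular ∧ IsProbabilityMeasure μ ∧ NoAtoms μ ∧
      ∀ f : C(X, ℂ), ψ (ιC f) = ∫ x, f x ∂μ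

open scoped InnerProductSpace BoundedContinuousFunction

section Linfty

variable {X : Type*}

open scoped Classical in
lemma linfDelta_apply (x z : X) : linfDelta x z = if z = x then 1 else 0 := rfl

lemma isStarProjection_linfDelta (x : X) : IsStarProjection (linfDelta x) := by
  classical
  rw [isStarProjection_iff']
  constructor <;> ext z <;> by_cases hz : z = x <;>
    simp [lp.infty_coeFn_mul, lp.star_apply, linfDelta_apply, hz]

lemma inclCLinf_mul_linfDelta [TopologicalSpace X] [CompactSpace X] (g : C(X, ℂ)) (x : X) :
    inclCLinf g * linfDelta x = g x • linfDelta x := by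
  classical
  ext z
  by_cases hz : z = x <;> simp [lp.infty_coeFn_mul, linfDelta_apply, inclCLinf, hz]

lemma exists_star_mul_self_eq_of_nonneg {F : lp (fun _ : X => ℂ) ∞} (hF : ∀ z, 0 ≤ F z) :
    ∃ s : lp (fun _ : X => ℂ) ∞, star s * s = F := by
  refine ⟨⟨fun z => (√(F z).re : ℂ), memℓp_infty ⟨√‖F‖, ?_⟩⟩, ?_⟩
  · rintro r ⟨z, rfl⟩
    simp only [Complex.norm_real, Real.norm_eq_abs, abs_of_nonneg (Real.sqrt_nonneg _)]
    exact Real.sqrt_le_sqrt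
      ((Complex.re_le_norm _).trans (lp.norm_apply_le_norm ENNReal.top_ne_zero F z))
  · ext z
    have hFz : F z = (F z).re :=
      Complex.eq_re_of_ofReal_le (r := 0) (by rw [Complex.ofReal_zero]; exact hF z)
    simp only [lp.infty_coeFn_mul, Pi.mul_apply, lp.star_apply, Complex.star_def,
      Complex.conj_ofReal]
    rw [← Complex.ofReal_mul, Real.mul_self_sqrt (Complex.nonneg_iff.mp (hF z)).1, ← hFz]

end Linfty

lemma IsIdempotentElem.exists_norm_eq_one_apply_eq_self {𝕜 E : Type*} [RCLike 𝕜]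
    [NormedAddCommGroup E] [NormedSpace 𝕜 E] {P : E →L[𝕜] E} (hP : IsIdempotentElem P) {v : E}
    (hv : P v ≠ 0) : ∃ w, ‖w‖ = 1 ∧ P w = w :=
  ⟨(‖P v‖⁻¹ : 𝕜) • P v, norm_smul_inv_norm hv, by
    rw [map_smul, ← mul_apply_eq_comp, hP.eq]⟩

section VectorState

variable {A K : Type*} [Semiring A] [Algebra ℂ A] [Star A]
  [NormedAddCommGroup K] [InnerProductSpace ℂ K] [CompleteSpace K]

lemma inner_map_star_mul_self_apply (φ : A →⋆ₐ[ℂ] (K →L[ℂ] K)) (a : A) (w : K) :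
    ⟪w, φ (star a * a) w⟫_ℂ = (‖φ a w‖ ^ 2 : ℂ) := by
  rw [map_mul, map_star, mul_apply_eq_comp, ContinuousLinearMap.star_eq_adjoint,
    ContinuousLinearMap.adjoint_inner_right, inner_self_eq_norm_sq_to_K]
  rfl

noncomputable def vectorState (φ : A →⋆ₐ[ℂ] (K →L[ℂ] K)) (w : K) : A →ₗ[ℂ] ℂ :=
  (innerSL ℂ w).toLinearMap ∘ₗ (ContinuousLinearMap.apply ℂ K w).toLinearMap ∘ₗ
    φ.toAlgHom.toLinearMap

variable (φ : A →⋆ₐ[ℂ] (K →L[ℂ] K)) (w : K)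

lemma vectorState_apply (a : A) : vectorState φ w a = ⟪w, φ a w⟫_ℂ := rfl

lemma vectorState_one (hw : ‖w‖ = 1) : vectorState φ w 1 = 1 := by
  simp [vectorState_apply, inner_self_eq_norm_sq_to_K, hw]

lemma vectorState_star_mul_self_nonneg (a : A) : 0 ≤ vectorState φ w (star a * a) := by
  rw [vectorState_apply, inner_map_star_mul_self_apply]
  exact_mod_cast sq_nonneg ‖φ a w‖

end VectorState

lemma exists_bounded_eqOn_one_integral_lt {X : Type*} [TopologicalSpace X] [NormalSpace X]
    [MeasurableSpace X] [OpensMeasurableSpace X] (μ : Measure X) [IsFiniteMeasure μ]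
    [μ.OuterRegular] {s : Set X} (hs : IsClosed s) (hμs : μ s = 0) {ε : ℝ} (hε : 0 < ε) :
    ∃ f : X →ᵇ ℝ, Set.EqOn f 1 s ∧ (∀ z, 0 ≤ f z) ∧ ∫ z, f z ∂μ < ε := by
  obtain ⟨U, hsU, hU, hμU⟩ :=
    s.exists_isOpen_lt_of_lt (ENNReal.ofReal ε) (by rw [hμs]; exact ENNReal.ofReal_pos.mpr hε)
  obtain ⟨f, hfU, hfs, hf01⟩ :=
    exists_bounded_zero_one_of_closed hU.isClosed_compl hs hsU.disjoint_compl_left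
  refine ⟨f, hfs, fun z => (hf01 z).1, ?_⟩
  have hf_le : ∀ z, f z ≤ U.indicator 1 z := by
    intro z
    by_cases hz : z ∈ U
    · simpa [hz] using (hf01 z).2
    · simp [hz, hfU hz]
  calc ∫ z, f z ∂μ ≤ ∫ z, U.indicator 1 z ∂μ :=
        integral_mono (f.integrable μ) ((integrable_const 1).indicator hU.measurableSet) hf_le
    _ = μ.real U := integral_indicator_one hU.measurableSet
    _ < ε := ENNReal.toReal_lt_of_lt_ofReal hμU

section LinftyRepresentation

variable {X K : Type*} [NormedAddCommGroup K] [InnerProductSpace ℂ K] [CompleteSpace K]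
  (Φ : lp (fun _ : X => ℂ) ∞ →⋆ₐ[ℂ] (K →L[ℂ] K))

lemma map_inclCLinf_apply_of_map_linfDelta_apply_eq [TopologicalSpace X] [CompactSpace X]
    {w : K} {y : X} (hw : Φ (linfDelta y) w = w) (g : C(X, ℂ)) : Φ (inclCLinf g) w = g y • w := by
  conv_lhs => rw [← hw]
  rw [← mul_apply_eq_comp, ← map_mul, inclCLinf_mul_linfDelta, map_smul, smul_apply, hw]

lemma norm_sq_map_linfDelta_apply_le (w : K) {F : lp (fun _ : X => ℂ) ∞} {x : X}
    (hF : ∀ z, linfDelta x z ≤ F z) : (‖Φ (linfDelta x) w‖ ^ 2 : ℂ) ≤ ⟪w, Φ F w⟫_ℂ := by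
  obtain ⟨s, hs⟩ := exists_star_mul_self_eq_of_nonneg (F := F - linfDelta x)
    (fun z => by simpa using sub_nonneg.mpr (hF z))
  have hδ := isStarProjection_linfDelta x
  calc (‖Φ (linfDelta x) w‖ ^ 2 : ℂ) = ⟪w, Φ (linfDelta x) w⟫_ℂ := by
        rw [← inner_map_star_mul_self_apply, hδ.isSelfAdjoint.star_eq, hδ.isIdempotentElem.eq]
    _ ≤ ⟪w, Φ (linfDelta x) w⟫_ℂ + (‖Φ s w‖ ^ 2 : ℂ) := le_add_of_nonneg_right (by positivity)
    _ = ⟪w, Φ F w⟫_ℂ := by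
        rw [← inner_map_star_mul_self_apply, hs, map_sub, sub_apply, inner_sub_right,
          add_sub_cancel]

lemma map_linfDelta_apply_eq_zero_of_measure_singleton [TopologicalSpace X] [CompactSpace X]
    [T2Space X] [MeasurableSpace X] [BorelSpace X] {w : K} (μ : Measure X) [IsFiniteMeasure μ]
    [μ.OuterRegular] (hμ : ∀ f : C(X, ℂ), ⟪w, Φ (inclCLinf f) w⟫_ℂ = ∫ z, f z ∂μ) {x : X}
    (hx : μ {x} = 0) : Φ (linfDelta x) w = 0 := by
  suffices h : ∀ ε > 0, ‖Φ (linfDelta x) w‖ ^ 2 < ε by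
    have h0 : ‖Φ (linfDelta x) w‖ ^ 2 ≤ 0 :=
      le_of_forall_pos_lt_add fun ε hε => by simpa using h ε hε
    simpa using h0.antisymm (sq_nonneg _)
  intro ε hε
  obtain ⟨f, hfx, hf0, hfε⟩ := exists_bounded_eqOn_one_integral_lt μ isClosed_singleton hx hε
  let fℂ : C(X, ℂ) := ⟨fun z => (f z : ℂ), by fun_prop⟩
  have hδf : ∀ z, linfDelta x z ≤ inclCLinf fℂ z := by
    classical
    intro z
    by_cases hz : z = x
    · simp [linfDelta_apply, hz, inclCLinf, fℂ, hfx rfl]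
    · simpa [linfDelta_apply, hz, inclCLinf, fℂ] using hf0 z
  have hle := norm_sq_map_linfDelta_apply_le Φ w hδf
  have hfℂ : ∫ z, fℂ z ∂μ = ((∫ z, f z ∂μ : ℝ) : ℂ) := integral_ofReal
  rw [hμ, hfℂ] at hle
  exact lt_of_le_of_lt (by exact_mod_cast hle) hfε

end LinftyRepresentation

/-- **Theorem (no nontrivial normal spatial discretization of relatively diffuse pairs).**
Suppose `C(X)` and `C(Y)` sit relatively diffusely in a unital C*-algebra `A`, and
`φ : A → B(K)`, `φ_C : ℓ∞(X) → B(K)`, `φ_D : ℓ∞(Y) → B(K)` are unital `*`-homomorphisms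
with `φ_C` (resp. `φ_D`) extending `φ ∘ ι_C` (resp. `φ ∘ ι_D`).  If moreover for every
`v ∈ K` the families `(φ_C(δ_x) v)_x` and `(φ_D(δ_y) v)_y` are summable with sum `v`
(normality of `φ_C` and `φ_D`), then `K = 0`. -/
theorem stmt5 {A : Type*} [CStarAlgebra A]
    {K : Type*} [NormedAddCommGroup K] [InnerProductSpace ℂ K] [CompleteSpace K]
    {X Y : Type*} [TopologicalSpace X] [CompactSpace X] [T2Space X]
    [MeasurableSpace X] [BorelSpace X]
    [TopologicalSpace Y] [CompactSpace Y] [T2Space Y]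
    (ιC : C(X, ℂ) →⋆ₐ[ℂ] A) (ιD : C(Y, ℂ) →⋆ₐ[ℂ] A)
    (hdiff : RelativelyDiffuse ιC ιD)
    (φ : A →⋆ₐ[ℂ] (K →L[ℂ] K))
    (φC : lp (fun _ : X => ℂ) ∞ →⋆ₐ[ℂ] (K →L[ℂ] K))
    (φD : lp (fun _ : Y => ℂ) ∞ →⋆ₐ[ℂ] (K →L[ℂ] K))
    (hφC : ∀ f : C(X, ℂ), φC (inclCLinf f) = φ (ιC f))
    (hφD : ∀ f : C(Y, ℂ), φD (inclCLinf f) = φ (ιD f))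
    (hCnormal : ∀ v : K, HasSum (fun x : X => φC (linfDelta x) v) v)
    (hDnormal : ∀ v : K, HasSum (fun y : Y => φD (linfDelta y) v) v) :
    ∀ v : K, v = 0 := by
  intro v
  by_contra hv
  obtain ⟨y, hy⟩ : ∃ y, φD (linfDelta y) v ≠ 0 := by
    by_contra! h
    exact hv ((hDnormal v).unique (by simp [h]))
  obtain ⟨w, hw1, hyw⟩ :=
    ((isStarProjection_linfDelta y).map φD).isIdempotentElem.exists_norm_eq_one_apply_eq_self hy
  have hψD : ∀ g : C(Y, ℂ), vectorState φ w (ιD g) = g y := fun g => by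
    rw [vectorState_apply, ← hφD, map_inclCLinf_apply_of_map_linfDelta_apply_eq φD hyw,
      inner_smul_right, inner_self_eq_norm_sq_to_K, hw1]
    simp
  obtain ⟨μ, hreg, hprob, hatom, hμ⟩ := hdiff (vectorState φ w) (vectorState_one φ w hw1)
    (vectorState_star_mul_self_nonneg φ w) (fun g h => by simp only [hψD, ContinuousMap.mul_apply])
  have hCw : ∀ x, φC (linfDelta x) w = 0 := fun x =>
    map_linfDelta_apply_eq_zero_of_measure_singleton φC μ
      (fun f => by rw [hφC, ← vectorState_apply, hμ]) (hatom.measure_singleton x)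
  have hw0 : w = 0 := (hCnormal w).unique (by simp [hCw])
  simp [hw0] at hw1
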